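/- Fix a prime p not dividing n and a ∈ F_q where q is a power of p. The number of monic irreducible polynomials of degree n over F_q with trace (coefficient of x^{n-1}) equal to a is (1/(q·n)) · Σ_{d | n} μ(d) · q^{n/d}; in particular this count is independent of a. -/

import Mathlib

/-!
Gauss's formula `∑_{d ∣ m} d · N(d) = q^m` for the number `N(d)` of monic irreducible polynomials
of degree `d` comes from sorting the `q^m` elements of the degree-`m` extension of `F_q` by their
minimal polynomials: each monic irreducible `f` with `deg f ∣ m` is the minimal polynomial of
exactly `deg f` of them. Möbius inversion gives `n · N(n) = ∑_{d ∣ n} μ(d) q^(n/d)`.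
The translations `f(X) ↦ f(X + c)` preserve monic irreducible polynomials of degree `n` and add
`n c` to the coefficient of `X^(n-1)`; as `n` is invertible in `F_q`, `(c, g) ↦ g(X + c)` is a
bijection from `F_q × {trace a}` onto all `N(n)` of them.
-/

open Polynomial ArithmeticFunction

namespace Polynomial

theorem coeff_taylor_natDegree_sub_one {R : Type*} [Semiring R] (f : R[X]) (r : R) :
    (taylor r f).coeff (f.natDegree - 1) =
      f.coeff (f.natDegree - 1) + f.natDegree * f.leadingCoeff * r := by
  rcases Nat.eq_zero_or_pos f.natDegree with hf | hf
  · rw [eq_C_of_natDegree_eq_zero hf, taylor_C]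
    simp
  have hle : (hasseDeriv (f.natDegree - 1) f).natDegree ≤ 1 :=
    (natDegree_hasseDeriv_le f _).trans (by omega)
  rw [taylor_coeff, eval_eq_sum_range' (n := 2) (by omega), Finset.sum_range_succ,
    Finset.sum_range_one, hasseDeriv_coeff, hasseDeriv_coeff, zero_add, Nat.choose_self,
    show 1 + (f.natDegree - 1) = f.natDegree by omega, Nat.choose_symm hf,
    Nat.choose_one_right, leadingCoeff]
  simp [mul_assoc]

theorem Monic.coeff_taylor_of_natDegree_eq {R : Type*} [Semiring R] {f : R[X]} {n : ℕ}
    (hf : f.Monic) (hdeg : f.natDegree = n) (r : R) :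
    (taylor r f).coeff (n - 1) = f.coeff (n - 1) + n * r := by
  rw [← hdeg, coeff_taylor_natDegree_sub_one, hf.leadingCoeff, mul_one]

variable {R : Type*} [CommRing R] {f : R[X]} {r : R}

theorem monic_taylor_iff : (taylor r f).Monic ↔ f.Monic := by
  rw [Monic, Monic, leadingCoeff_taylor]

theorem irreducible_taylor_iff : Irreducible (taylor r f) ↔ Irreducible f :=
  MulEquiv.irreducible_iff (taylorEquiv r)

theorem monic_irreducible_natDegree_taylor_iff {n : ℕ} :
    ((taylor r f).Monic ∧ Irreducible (taylor r f) ∧ (taylor r f).natDegree = n) ↔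
      (f.Monic ∧ Irreducible f ∧ f.natDegree = n) := by
  rw [monic_taylor_iff, irreducible_taylor_iff, natDegree_taylor]

end Polynomial

noncomputable def prodTraceFiberEquiv {K : Type*} [Field K] {n : ℕ} (hn : (n : K) ≠ 0) (a : K) :
    K × {f : K[X] // f.Monic ∧ Irreducible f ∧ f.natDegree = n ∧ f.coeff (n - 1) = a} ≃
      {f : K[X] // f.Monic ∧ Irreducible f ∧ f.natDegree = n} where
  toFun cg := ⟨taylor cg.1 cg.2,
    monic_irreducible_natDegree_taylor_iff.2 ⟨cg.2.2.1, cg.2.2.2.1, cg.2.2.2.2.1⟩⟩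
  invFun f :=
    let c := (f.1.coeff (n - 1) - a) / n
    ⟨c, taylor (-c) f.1, by
      obtain ⟨hmon, hirr, hdeg⟩ := f.2
      refine ⟨monic_taylor_iff.2 hmon, irreducible_taylor_iff.2 hirr,
        (natDegree_taylor _ _).trans hdeg, ?_⟩
      rw [hmon.coeff_taylor_of_natDegree_eq hdeg, mul_neg, mul_div_cancel₀ _ hn]
      ring⟩
  left_inv cg := by
    obtain ⟨c, g, hmon, -, hdeg, htr⟩ := cg
    simp [hmon.coeff_taylor_of_natDegree_eq hdeg, htr, taylor_taylor, hn]
  right_inv f := by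
    simp [taylor_taylor]

namespace FiniteField

variable {K L : Type*} [Field K] [Field L] [Algebra K L] [Finite L]

-- The elements with minimal polynomial `f` are the roots of `f`, i.e. the `K`-embeddings of
-- `K[X]/(f)`; as finite extensions are Galois, there are `[K[X]/(f) : K]` of them.
theorem natCard_minpoly_fiber {f : K[X]} (hmon : f.Monic) (hirr : Irreducible f)
    (hdvd : f.natDegree ∣ Module.finrank K L) :
    Nat.card {x : L // minpoly K x = f} = f.natDegree := by
  have : Fact (Irreducible f) := ⟨hirr⟩
  have hfin : Module.finrank K (AdjoinRoot f) = f.natDegree := finrank_quotient_span_eq_natDegree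
  have e : {x : L // minpoly K x = f} ≃ (AdjoinRoot f →ₐ[K] L) :=
    (Equiv.subtypeEquivRight fun x => ?_).trans (AdjoinRoot.equiv L K f hirr.ne_zero).symm
  · rw [Nat.card_congr e, natCard_algHom_of_finrank_dvd (hfin ▸ hdvd), hfin]
  rw [mem_aroots, and_iff_right hirr.ne_zero]
  exact ⟨fun h => h ▸ minpoly.aeval K x,
    fun h => (minpoly.eq_of_irreducible_of_monic hirr h hmon).symm⟩

theorem mem_range_minpoly_iff {f : K[X]} :
    f ∈ Set.range (minpoly K : L → K[X]) ↔
      f.Monic ∧ Irreducible f ∧ f.natDegree ∣ Module.finrank K L := by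
  constructor
  · rintro ⟨x, rfl⟩
    have hx : IsIntegral K x := .of_finite K x
    exact ⟨minpoly.monic hx, minpoly.irreducible hx, minpoly.degree_dvd hx⟩
  · rintro ⟨hmon, hirr, hdvd⟩
    have : 0 < Nat.card {x : L // minpoly K x = f} := by
      rw [natCard_minpoly_fiber hmon hirr hdvd]
      exact hirr.natDegree_pos
    obtain ⟨x, hx⟩ := (Nat.card_pos_iff.1 this).1
    exact ⟨x, hx⟩

theorem natCard_eq_sum_divisors_mul_natCard_monicIrreducible :
    Nat.card L = ∑ d ∈ (Module.finrank K L).divisors,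
      d * Nat.card {f : K[X] // f.Monic ∧ Irreducible f ∧ f.natDegree = d} := by
  classical
  have := Fintype.ofFinite L
  set T := Finset.univ.image (minpoly K : L → K[X])
  have mem_T (f : K[X]) : f ∈ T ↔ f.Monic ∧ Irreducible f ∧ f.natDegree ∣ Module.finrank K L := by
    rw [← mem_range_minpoly_iff]
    simp [T]
  have card_filter_T {d : ℕ} (hd : d ∣ Module.finrank K L) :
      Nat.card {f : K[X] // f.Monic ∧ Irreducible f ∧ f.natDegree = d} =
        (T.filter (·.natDegree = d)).card := by
    rw [← Nat.card_eq_finsetCard]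
    refine Nat.card_congr (Equiv.subtypeEquivRight fun f => ?_)
    rw [Finset.mem_filter, mem_T]
    constructor
    · rintro ⟨hmon, hirr, rfl⟩; exact ⟨⟨hmon, hirr, hd⟩, rfl⟩
    · rintro ⟨⟨hmon, hirr, -⟩, rfl⟩; exact ⟨hmon, hirr, rfl⟩
  calc Nat.card L = ∑ f ∈ T, ((Finset.univ : Finset L).filter (minpoly K · = f)).card := by
        rw [Nat.card_eq_fintype_card, ← Finset.card_univ,
          Finset.card_eq_sum_card_image (minpoly K)]
    _ = ∑ f ∈ T, f.natDegree := Finset.sum_congr rfl fun f hf => by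
        obtain ⟨hmon, hirr, hdvd⟩ := (mem_T f).1 hf
        rw [← natCard_minpoly_fiber (L := L) hmon hirr hdvd, Nat.card_eq_fintype_card,
          Fintype.card_subtype]
    _ = ∑ d ∈ (Module.finrank K L).divisors, ∑ f ∈ T.filter (·.natDegree = d), f.natDegree :=
        (Finset.sum_fiberwise_of_maps_to (fun f hf => Nat.mem_divisors.2
          ⟨((mem_T f).1 hf).2.2, Module.finrank_pos.ne'⟩) _).symm
    _ = _ := Finset.sum_congr rfl fun d hd => by
        rw [Finset.sum_congr rfl fun f hf => (Finset.mem_filter.1 hf).2, Finset.sum_const,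
          smul_eq_mul, mul_comm, card_filter_T (Nat.dvd_of_mem_divisors hd)]

theorem sum_divisors_mul_natCard_monicIrreducible [Finite K] {m : ℕ} (hm : m ≠ 0) :
    ∑ d ∈ m.divisors, d * Nat.card {f : K[X] // f.Monic ∧ Irreducible f ∧ f.natDegree = d} =
      Nat.card K ^ m := by
  obtain ⟨p, hp⟩ := CharP.exists K
  have : Fact p.Prime := ⟨CharP.char_is_prime K p⟩
  have : NeZero m := ⟨hm⟩
  rw [← natCard_extension K p m, natCard_eq_sum_divisors_mul_natCard_monicIrreducible (K := K),
    finrank_extension]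

theorem mul_natCard_monicIrreducible_eq_sum_moebius [Finite K] {n : ℕ} (hn : n ≠ 0) :
    (n : ℤ) * Nat.card {f : K[X] // f.Monic ∧ Irreducible f ∧ f.natDegree = n} =
      ∑ d ∈ n.divisors, (moebius d : ℤ) * (Nat.card K : ℤ) ^ (n / d) := by
  have gauss := (sum_eq_iff_sum_mul_moebius_eq (R := ℤ)
    (f := fun d => (d : ℤ) * Nat.card {f : K[X] // f.Monic ∧ Irreducible f ∧ f.natDegree = d})
    (g := fun m => (Nat.card K : ℤ) ^ m)).1 (fun m hm => by
      exact_mod_cast sum_divisors_mul_natCard_monicIrreducible (K := K) hm.ne') n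
    (Nat.pos_of_ne_zero hn)
  simp only [Int.cast_id] at gauss
  rw [← gauss, Nat.sum_divisorsAntidiagonal (fun d e => (moebius d : ℤ) * (Nat.card K : ℤ) ^ e)]

end FiniteField

open FiniteField in
theorem stmt4_general {K : Type} [Field K] [Fintype K] {p q n : ℕ} [CharP K p]
    (hq : Fintype.card K = q) (hpn : ¬ p ∣ n) (a : K) :
    (q * n : ℤ) *
        Nat.card {f : K[X] // f.Monic ∧ Irreducible f ∧ f.natDegree = n ∧ f.coeff (n - 1) = a}
      = ∑ d ∈ n.divisors, (moebius d : ℤ) * (q : ℤ) ^ (n / d) := by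
  have hn : (n : K) ≠ 0 := (CharP.cast_eq_zero_iff K p n).not.2 hpn
  have hn0 : n ≠ 0 := by rintro rfl; exact hn Nat.cast_zero
  have hK : Nat.card K = q := Nat.card_eq_fintype_card.trans hq
  have hcard := Nat.card_congr (prodTraceFiberEquiv hn a)
  rw [Nat.card_prod, hK] at hcard
  have count := mul_natCard_monicIrreducible_eq_sum_moebius (K := K) hn0
  rw [← hcard, hK] at count
  rw [← count]
  push_cast
  ring

/-- For `p ∤ n` and `a` in a finite field of cardinality `q` and characteristic `p`, the
number of monic irreducible polynomials of degree `n` with trace (coefficient of `x^(n-1)`)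
equal to `a` is `(1/(q·n)) · Σ_{d | n} μ(d) q^(n/d)`; in particular it is independent of `a`. -/
theorem stmt4 {K : Type} [Field K] [Fintype K] {p q n : ℕ} (hp : p.Prime) [CharP K p]
    (hq : Fintype.card K = q) (hn : 1 ≤ n) (hpn : ¬ p ∣ n) (a : K) :
    (q * n : ℤ) *
        Nat.card {f : K[X] // f.Monic ∧ Irreducible f ∧ f.natDegree = n ∧ f.coeff (n - 1) = a}
      = ∑ d ∈ n.divisors, (moebius d : ℤ) * (q : ℤ) ^ (n / d) :=
  stmt4_general hq hpn a
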